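/- Let ρ(θ) = e^{−G(θ)}/Z(θ) with G(θ) = ∑_j θ_j G_j, Z(θ) = Tr[e^{−G(θ)}], and suppose the derivative formula ∂_j ρ(θ) = −(1/2){Φ_θ(G_j), ρ(θ)} + ρ(θ)⟨G_j⟩_{ρ(θ)} holds, where Φ_θ is a Hermiticity-preserving linear map commuting with conjugation by e^{iG(θ)t}. Then the Fisher–Bures information matrix elements satisfy I^{FB}_{ij}(θ) = (1/2) Tr[{Φ_θ(G_i), Φ_θ(G_j)} ρ(θ)] − ⟨G_i⟩_{ρ(θ)} ⟨G_j⟩_{ρ(θ)}. -/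

import Mathlib

/-!
Conjugating by the unitary whose columns are the eigenvectors `u k` diagonalises `ρ`, and the
derivative formula becomes `⟨k|∂ρ|ℓ⟩ = -½ (λ_k + λ_ℓ) ⟨k|Φ(G)|ℓ⟩ + δ_kℓ λ_k ⟨G⟩`. The factor
`λ_k + λ_ℓ` cancels the Fisher–Bures denominator, so with `A`, `B` the matrices of `Φ(G_i)`,
`Φ(G_j)` in the eigenbasis the first terms contribute
`¼ ∑ (λ_k + λ_ℓ) A_kℓ B_ℓk = ½ Tr[{A, B} ρ]`, while by `Tr ρ = 1` and `Tr[ρ Φ(G)] = ⟨G⟩` the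
diagonal corrections add up to `-⟨G_i⟩⟨G_j⟩`.
-/

open Matrix

/-- Fisher--Bures information matrix element, expressed through eigenvalues `lam`,
orthonormal eigenvectors `u` of the state, and derivative matrices `d`. -/
noncomputable def fisherBures {ι : Type*} [Fintype ι] {J : ℕ}
    (lam : ι → ℝ) (u : ι → ι → ℂ) (d : Fin J → Matrix ι ι ℂ) (i j : Fin J) : ℂ :=
  2 * ∑ k, ∑ ℓ,
      (star (u k) ⬝ᵥ (d i).mulVec (u ℓ)) * (star (u ℓ) ⬝ᵥ (d j).mulVec (u k)) /
        (((lam k + lam ℓ : ℝ)) : ℂ)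

noncomputable def thermalTangent {A : Type*} [Ring A] [Algebra ℂ A] (ρ X : A) (c : ℂ) : A :=
  -(1 / 2 : ℂ) • (X * ρ + ρ * X) + c • ρ

theorem map_thermalTangent {A B F : Type*} [Ring A] [Algebra ℂ A] [Ring B] [Algebra ℂ B]
    [FunLike F A B] [AlgHomClass F ℂ A B] (f : F) (ρ X : A) (c : ℂ) :
    f (thermalTangent ρ X c) = thermalTangent (f ρ) (f X) c := by
  simp only [thermalTangent, map_add, map_smul, map_mul]

theorem eq_zero_or_trace_eq_one {ι : Type*} [Fintype ι] {ρ E : Matrix ι ι ℂ}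
    (h : ρ = (trace E)⁻¹ • E) : ρ = 0 ∨ trace ρ = 1 := by
  by_cases hE : trace E = 0
  · simp [h, hE]
  · simp [h, trace_smul, hE]

namespace Matrix

variable {ι : Type*} [Fintype ι]

theorem star_dotProduct_mulVec_eq_conjTranspose_mul_mul_apply (u : ι → ι → ℂ)
    (M : Matrix ι ι ℂ) (k ℓ : ι) :
    star (u k) ⬝ᵥ M *ᵥ u ℓ = ((of u)ᵀᴴ * M * (of u)ᵀ) k ℓ := by
  simp only [mul_apply, conjTranspose_apply, transpose_apply, of_apply, dotProduct, mulVec,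
    Pi.star_apply, Finset.sum_mul, Finset.mul_sum]
  rw [Finset.sum_comm]
  exact Finset.sum_congr rfl fun _ _ => Finset.sum_congr rfl fun _ _ => by ring

variable [DecidableEq ι]

theorem trace_conjStarAlgAut {R : Type*} [CommRing R] [StarRing R] (U : unitaryGroup ι R)
    (M : Matrix ι ι R) : trace (Unitary.conjStarAlgAut R _ U M) = trace M := by
  rw [Unitary.conjStarAlgAut_apply, trace_mul_comm, ← mul_assoc, Unitary.coe_star_mul_self,
    one_mul]

theorem of_transpose_mem_unitaryGroup {u : ι → ι → ℂ}
    (horth : ∀ k ℓ, star (u k) ⬝ᵥ u ℓ = if k = ℓ then 1 else 0) :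
    (of u)ᵀ ∈ unitaryGroup ι ℂ := by
  rw [mem_unitaryGroup_iff']
  ext k ℓ
  simpa [mul_apply, one_apply, dotProduct] using horth k ℓ

theorem mul_of_transpose_eq_mul_diagonal {ρ : Matrix ι ι ℂ} {u : ι → ι → ℂ} {lam : ι → ℂ}
    (heig : ∀ k, ρ *ᵥ u k = lam k • u k) :
    ρ * (of u)ᵀ = (of u)ᵀ * diagonal lam := by
  ext m k
  rw [mul_diagonal]
  simp only [mul_apply, transpose_apply, of_apply]
  simpa [mulVec, dotProduct, mul_comm] using congrFun (heig k) m

theorem trace_mul_diagonal (M : Matrix ι ι ℂ) (lam : ι → ℂ) :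
    trace (M * diagonal lam) = ∑ k, M k k * lam k := by
  simp only [trace, diag, mul_diagonal]

theorem trace_anticommutator_mul_diagonal (A B : Matrix ι ι ℂ) (lam : ι → ℂ) :
    trace ((A * B + B * A) * diagonal lam) = ∑ k, ∑ ℓ, (lam k + lam ℓ) * (A k ℓ * B ℓ k) := by
  rw [add_mul, trace_add, trace_mul_diagonal, trace_mul_diagonal]
  simp only [mul_apply, Finset.sum_mul]
  rw [Finset.sum_comm (f := fun k ℓ => B k ℓ * A ℓ k * lam k), ← Finset.sum_add_distrib]
  refine Finset.sum_congr rfl fun _ _ => ?_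
  rw [← Finset.sum_add_distrib]
  exact Finset.sum_congr rfl fun _ _ => by ring

theorem thermalTangent_diagonal_apply (lam : ι → ℂ) (A : Matrix ι ι ℂ) (c : ℂ) (k ℓ : ι) :
    thermalTangent (diagonal lam) A c k ℓ =
      -(1 / 2) * (lam k + lam ℓ) * A k ℓ + if k = ℓ then c * lam k else 0 := by
  by_cases h : k = ℓ
  · subst h
    simp [thermalTangent]
    ring
  · simp [thermalTangent, h]
    ring

theorem thermalTangent_diagonal_apply_mul_div {lam : ι → ℂ} (hlam : ∀ k ℓ, lam k + lam ℓ ≠ 0)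
    (A B : Matrix ι ι ℂ) (a b : ℂ) (k ℓ : ι) :
    thermalTangent (diagonal lam) A a k ℓ * thermalTangent (diagonal lam) B b ℓ k /
        (lam k + lam ℓ) =
      (1 / 4) * ((lam k + lam ℓ) * (A k ℓ * B ℓ k)) +
        if k = ℓ then lam k * (a * b - b * A k k - a * B k k) / 2 else 0 := by
  have hkℓ := hlam k ℓ
  rw [thermalTangent_diagonal_apply, thermalTangent_diagonal_apply]
  by_cases h : k = ℓ
  · subst h
    simp only [if_true]
    field_simp
    ring
  · simp only [if_neg h, if_neg (Ne.symm h)]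
    field_simp
    ring

theorem sum_thermalTangent_diagonal_apply_mul_div {lam : ι → ℂ}
    (hlam : ∀ k ℓ, lam k + lam ℓ ≠ 0) (A B : Matrix ι ι ℂ) (a b : ℂ) :
    2 * ∑ k, ∑ ℓ, thermalTangent (diagonal lam) A a k ℓ *
        thermalTangent (diagonal lam) B b ℓ k / (lam k + lam ℓ) =
      (1 / 2) * trace ((A * B + B * A) * diagonal lam) + a * b * trace (diagonal lam) -
        b * trace (A * diagonal lam) - a * trace (B * diagonal lam) := by
  rw [trace_anticommutator_mul_diagonal, trace_mul_diagonal, trace_mul_diagonal, trace_diagonal]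
  simp only [Finset.mul_sum, ← Finset.sum_add_distrib, ← Finset.sum_sub_distrib]
  refine Finset.sum_congr rfl fun k _ => ?_
  simp only [thermalTangent_diagonal_apply_mul_div hlam, mul_add, mul_ite, mul_zero,
    Finset.sum_add_distrib, Finset.sum_ite_eq, Finset.mem_univ, if_true, ← Finset.mul_sum]
  ring

end Matrix

theorem fisherBures_thermal_general {n J : ℕ}
    (G : Fin J → Matrix (Fin n) (Fin n) ℂ)
    (θ : Fin J → ℝ)
    (ρ : Matrix (Fin n) (Fin n) ℂ)
    (hρ : ρ = (Matrix.trace (NormedSpace.exp (-(∑ j, (θ j : ℂ) • G j))))⁻¹ •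
        NormedSpace.exp (-(∑ j, (θ j : ℂ) • G j)))
    (lam : Fin n → ℝ) (u : Fin n → (Fin n → ℂ))
    (hlam : ∀ k, 0 < lam k)
    (horth : ∀ k ℓ, star (u k) ⬝ᵥ u ℓ = if k = ℓ then (1 : ℂ) else 0)
    (heig : ∀ k, ρ.mulVec (u k) = (lam k : ℂ) • u k)
    (Φ : Matrix (Fin n) (Fin n) ℂ →ₗ[ℂ] Matrix (Fin n) (Fin n) ℂ)
    (hΦtr : ∀ j, Matrix.trace (ρ * Φ (G j)) = Matrix.trace (ρ * G j))
    (dρ : Fin J → Matrix (Fin n) (Fin n) ℂ)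
    (hdρ : ∀ j, dρ j = -(1 / 2 : ℂ) • (Φ (G j) * ρ + ρ * Φ (G j)) +
        (Matrix.trace (G j * ρ)) • ρ)
    (i j : Fin J) :
    fisherBures lam u dρ i j
      = (1 / 2 : ℂ) * Matrix.trace ((Φ (G i) * Φ (G j) + Φ (G j) * Φ (G i)) * ρ) -
          Matrix.trace (G i * ρ) * Matrix.trace (G j * ρ) := by
  have hV := of_transpose_mem_unitaryGroup horth
  set f := Unitary.conjStarAlgAut ℂ (Matrix (Fin n) (Fin n) ℂ) (star ⟨_, hV⟩)
  have hf (M : Matrix (Fin n) (Fin n) ℂ) : f M = (of u)ᵀᴴ * M * (of u)ᵀ :=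
    Unitary.conjStarAlgAut_star_apply _ _
  have hfρ : f ρ = diagonal fun k => (lam k : ℂ) := by
    rw [hf, mul_assoc, mul_of_transpose_eq_mul_diagonal heig, ← mul_assoc,
      ← star_eq_conjTranspose, mem_unitaryGroup_iff'.mp hV, one_mul]
  have hlam_add (k ℓ : Fin n) : (lam k : ℂ) + lam ℓ ≠ 0 := by
    exact_mod_cast (add_pos (hlam k) (hlam ℓ)).ne'
  have htrace (M : Matrix (Fin n) (Fin n) ℂ) : trace (f M * f ρ) = trace (M * ρ) := by
    rw [← map_mul, trace_conjStarAlgAut]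
  have hexpect (p : Fin J) : trace (Φ (G p) * ρ) = trace (G p * ρ) := by
    rw [trace_mul_comm, hΦtr, trace_mul_comm]
  have hdρ' (p : Fin J) : dρ p = thermalTangent ρ (Φ (G p)) (trace (G p * ρ)) := hdρ p
  calc fisherBures lam u dρ i j
      = 2 * ∑ k, ∑ ℓ, f (dρ i) k ℓ * f (dρ j) ℓ k / ((lam k : ℂ) + lam ℓ) := by
        simp only [fisherBures, star_dotProduct_mulVec_eq_conjTranspose_mul_mul_apply, hf,
          Complex.ofReal_add]
    _ = _ := by
        rw [hdρ', hdρ', map_thermalTangent, map_thermalTangent, hfρ,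
          sum_thermalTangent_diagonal_apply_mul_div hlam_add, ← hfρ, ← map_mul f, ← map_mul f,
          ← map_add f, htrace, htrace, htrace, hexpect, hexpect, trace_conjStarAlgAut]
        -- `0⁻¹ = 0`: if the partition function vanishes then `ρ = 0`
        rcases eq_zero_or_trace_eq_one hρ with h | h
        · simp [h]
        · rw [h]
          ring

/-- Theorem 1: for the thermal family ρ(θ) = e^{−G(θ)}/Z(θ) with
G(θ) = ∑_j θ_j G_j, if the derivative formula
∂_j ρ = −(1/2){Φ(G_j), ρ} + ρ⟨G_j⟩ holds for a Hermiticity-preserving linear map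
Φ satisfying Tr[ρ Φ(G_j)] = ⟨G_j⟩_ρ, then
I^{FB}_{ij} = (1/2)Tr[{Φ(G_i), Φ(G_j)} ρ] − ⟨G_i⟩_ρ ⟨G_j⟩_ρ. -/
theorem fisherBures_thermal {n J : ℕ}
    (G : Fin J → Matrix (Fin n) (Fin n) ℂ) (hG : ∀ j, (G j).IsHermitian)
    (θ : Fin J → ℝ)
    (ρ : Matrix (Fin n) (Fin n) ℂ)
    (hρ : ρ = (Matrix.trace (NormedSpace.exp (-(∑ j, (θ j : ℂ) • G j))))⁻¹ •
        NormedSpace.exp (-(∑ j, (θ j : ℂ) • G j)))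
    (lam : Fin n → ℝ) (u : Fin n → (Fin n → ℂ))
    (hlam : ∀ k, 0 < lam k)
    (horth : ∀ k ℓ, star (u k) ⬝ᵥ u ℓ = if k = ℓ then (1 : ℂ) else 0)
    (heig : ∀ k, ρ.mulVec (u k) = (lam k : ℂ) • u k)
    (Φ : Matrix (Fin n) (Fin n) ℂ →ₗ[ℂ] Matrix (Fin n) (Fin n) ℂ)
    (hΦherm : ∀ X : Matrix (Fin n) (Fin n) ℂ, X.IsHermitian → (Φ X).IsHermitian)
    (hΦtr : ∀ j, Matrix.trace (ρ * Φ (G j)) = Matrix.trace (ρ * G j))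
    (dρ : Fin J → Matrix (Fin n) (Fin n) ℂ)
    (hdρ : ∀ j, dρ j = -(1 / 2 : ℂ) • (Φ (G j) * ρ + ρ * Φ (G j)) +
        (Matrix.trace (G j * ρ)) • ρ)
    (i j : Fin J) :
    fisherBures lam u dρ i j
      = (1 / 2 : ℂ) * Matrix.trace ((Φ (G i) * Φ (G j) + Φ (G j) * Φ (G i)) * ρ) -
          Matrix.trace (G i * ρ) * Matrix.trace (G j * ρ) :=
  fisherBures_thermal_general G θ ρ hρ lam u hlam horth heig Φ hΦtr dρ hdρ i j
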